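/- Let f : X → Y be a continuous, open, surjective map of topological spaces whose fibers contain no nontrivial specializations (i.e., if x ≠ x' lie in the same fiber then x ∉ closure{x'}). If U ∈ D_i(X) (every point of X \ U starts an increasing sequence of length i in X), then the image f(U) is open in Y and f(U) ∈ D_i(Y). -/
import Mathlib


/-- There is an increasing sequence of length `i` starting at `x`. -/
def IncSeqFrom {X : Type*} [TopologicalSpace X] (i : ℕ) (x : X) : Prop :=
  ∃ s : ℕ → X, s 0 = x ∧ ∀ j < i, s j ≠ s (j + 1) ∧ s j ∈ closure ({s (j + 1)} : Set X)

/-- `DFam X i` is the family of open subsets `U ⊆ X` such that every point of `X \ U`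
starts an increasing sequence of length `i`. -/
def DFam (X : Type*) [TopologicalSpace X] (i : ℕ) : Set (Set X) :=
  {U | IsOpen U ∧ ∀ x ∉ U, IncSeqFrom i x}

/-- If `f : X → Y` is continuous, open and surjective with fibers containing no
nontrivial specializations, then the image of a member of `D_i(X)` is open and is a
member of `D_i(Y)`. -/
theorem stmt14 {X Y : Type*} [TopologicalSpace X] [TopologicalSpace Y]
    (f : X → Y) (hc : Continuous f) (ho : IsOpenMap f) (hs : Function.Surjective f)
    (hfib : ∀ x x' : X, f x = f x' → x ∈ closure ({x'} : Set X) → x = x')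
    (i : ℕ) (U : Set X) (hU : U ∈ DFam X i) :
    IsOpen (f '' U) ∧ f '' U ∈ DFam Y i := by
  obtain ⟨hUo, hUd⟩ := hU
  refine ⟨ho U hUo, ho U hUo, ?_⟩
  intro y hy
  obtain ⟨x, rfl⟩ := hs y
  have hx : x ∉ U := fun h => hy ⟨x, h, rfl⟩
  obtain ⟨s, hs0, hseq⟩ := hUd x hx
  refine ⟨f ∘ s, by simp [hs0], fun j hj => ?_⟩
  obtain ⟨hne, hcl⟩ := hseq j hj
  have hcl' : f (s j) ∈ closure ({f (s (j + 1))} : Set Y) := by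
    have := (hc.closure_preimage_subset {f (s (j+1))})
    refine this ?_
    refine closure_mono ?_ hcl
    intro a ha
    simp only [Set.mem_singleton_iff] at ha
    simp [ha]
  exact ⟨fun h => hne (hfib _ _ h hcl), hcl'⟩
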